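/- Suppose f > 0 is Lipschitz on X. Then any weak* accumulation point of the zeta probabilities μ_{c,s} as c → ∞ and s → 1 is an f-maximizing measure, i.e., satisfies ∫ f dμ = β(f). -/

import Mathlib

open MeasureTheory Filter Real Topology
open scoped ENNReal

noncomputable section

abbrev X (d : ℕ) : Type := ℕ → Fin d

def shift {d : ℕ} (x : X d) : X d := fun n => x (n + 1)

def birkhoff {d : ℕ} (f : X d → ℝ) (n : ℕ) (x : X d) : ℝ :=
  ∑ i ∈ Finset.range n, f (shift^[i] x)

def IsPeriodic {d : ℕ} (x : X d) : Prop := ∃ n, 0 < n ∧ shift^[n] x = x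

def minPer {d : ℕ} (x : X d) : ℕ := Function.minimalPeriod shift x

def beta {d : ℕ} (f : X d → ℝ) : ℝ :=
  sSup {r : ℝ | ∃ μ : Measure (X d), IsProbabilityMeasure μ ∧ μ.map shift = μ ∧ r = ∫ x, f x ∂μ}

def Ifun {d : ℕ} (f : X d → ℝ) (x : X d) : ℝ :=
  (minPer x : ℝ) * beta f - birkhoff f (minPer x) x

def dtheta {d : ℕ} (θ : ℝ) (x y : X d) : ℝ :=
  letI : Decidable (x = y) := Classical.dec _
  if h : x = y then 0 else θ ^ Nat.find (Function.ne_iff.mp h)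

def LipWrt {d : ℕ} (θ C : ℝ) (f : X d → ℝ) : Prop :=
  ∀ x y, |f x - f y| ≤ C * dtheta θ x y

def periodize {d : ℕ} (n : ℕ) (w : Fin (n + 1) → Fin d) : X d :=
  fun i => w ⟨i % (n + 1), Nat.mod_lt i (Nat.succ_pos n)⟩

def pressure {d : ℕ} (g : X d → ℝ) : ℝ :=
  Filter.limsup (fun n : ℕ =>
    Real.log (∑ w : Fin (n + 1) → Fin d, Real.exp (birkhoff g (n + 1) (periodize n w))) / ((n : ℝ) + 1))
    Filter.atTop

def zetaVal {d : ℕ} (f : X d → ℝ) (c s : ℝ) (k : X d → ℝ) : ℝ :=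
  ∑' n : ℕ, ∑ w : Fin (n + 1) → Fin d,
    Real.exp (c * s * birkhoff f (n + 1) (periodize n w) -
    ((n : ℝ) + 1) * pressure (fun y => c * f y))
      * (birkhoff k (n + 1) (periodize n w) / ((n : ℝ) + 1))

def etaVal {d : ℕ} (f : X d → ℝ) (c : ℝ) (N : ℕ) (k : X d → ℝ) : ℝ :=
  ∑ n ∈ Finset.range N, ∑ w : Fin (n + 1) → Fin d,
    Real.exp (c * birkhoff f (n + 1) (periodize n w)) * (birkhoff k (n + 1) (periodize n w) / ((n : ℝ) + 1))

def piVal {d : ℕ} (f : X d → ℝ) (c : ℝ) (N : ℕ) (k : X d → ℝ) : ℝ :=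
  ∑ n ∈ Finset.range N, ∑ w : Fin (n + 1) → Fin d,
    Real.exp (c * birkhoff f (n + 1) (periodize n w) - ((n : ℝ) + 1) * pressure (fun y => c * f y))
      * (birkhoff k (n + 1) (periodize n w) / ((n : ℝ) + 1))

def cylSet {d : ℕ} (m : ℕ) (w : Fin m → Fin d) : Set (X d) :=
  {x : X d | ∀ i : Fin m, x i = w i}

def Itilde {d : ℕ} (θ : ℝ) (f : X d → ℝ) (x : X d) : EReal :=
  ⨆ ε : {e : ℝ // 0 < e},
    sInf {r : EReal | ∃ y : X d, IsPeriodic y ∧ dtheta θ x y ≤ ε.1 ∧ r = ((Ifun f y : ℝ) : EReal)}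

def orbitMeasure {d : ℕ} (x : X d) : Measure (X d) :=
  ((minPer x : ℝ≥0∞))⁻¹ • ∑ i ∈ Finset.range (minPer x), Measure.dirac (shift^[i] x)

/-
Every periodic average of `f` is at most `β(f)`, so every zeta average `∫ f dμ_{c,s}` is at most
`β(f)`. Lipschitz regularity gives bounded distortion of Birkhoff sums, hence the pressure bounds
`c β(f) ≤ P(cf) ≤ c β(f) + log d` and, crucially, periodic orbits whose *total* defect
`n β(f) - f^n(x)` is an arbitrarily small `ε`. Such an orbit has zeta weight at least
`exp (-c (s ε + (1 - s) n β(f)) - n log d)`, whereas all words of average below `β(f) - 2ε` weigh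
at most `2 d exp (-2 c s ε)` in total. As `c → ∞` and `s → 1` the latter become negligible, so the
zeta averages tend to `β(f)`, and so does `∫ f dν`.

The small-defect orbits come from a contradiction argument: if every periodic defect exceeded `ε`,
each return of a long enough block would cost `ε / 2`; some block recurs infinitely often along
every orbit, compactness makes the resulting drop of the Birkhoff sums of `f - β(f)` uniform, and
then every invariant measure would integrate `f` to at most `β(f) - 1 / n₀`.
-/

section Shift

variable {d : ℕ}

lemma shift_iterate_apply (x : X d) (k i : ℕ) : (shift^[k] x) i = x (i + k) := by
  induction k generalizing x with
  | zero => rfl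
  | succ k ih => rw [Function.iterate_succ_apply, ih]; rfl

lemma periodize_of_lt (n : ℕ) (w : Fin (n + 1) → Fin d) {i : ℕ} (h : i < n + 1) :
    periodize n w i = w ⟨i, h⟩ := by
  simp only [periodize, Nat.mod_eq_of_lt h]

lemma shift_iterate_periodize (n : ℕ) (w : Fin (n + 1) → Fin d) :
    shift^[n + 1] (periodize n w) = periodize n w := by
  funext i
  simp only [shift_iterate_apply, periodize, Nat.add_mod_right]

lemma continuous_shift : Continuous (shift (d := d)) :=
  continuous_pi fun m => continuous_apply (m + 1)

lemma measurable_shift : Measurable (shift (d := d)) :=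
  continuous_shift.measurable

lemma birkhoff_zero (g : X d → ℝ) (x : X d) : birkhoff g 0 x = 0 := rfl

lemma birkhoff_add (g : X d → ℝ) (m n : ℕ) (x : X d) :
    birkhoff g (m + n) x = birkhoff g m x + birkhoff g n (shift^[m] x) := by
  simp only [birkhoff, Finset.sum_range_add, ← Function.iterate_add_apply, Nat.add_comm _ m]

lemma birkhoff_const (r : ℝ) (n : ℕ) (x : X d) : birkhoff (fun _ => r) n x = n * r := by
  simp [birkhoff]

lemma birkhoff_const_mul (c : ℝ) (g : X d → ℝ) (n : ℕ) (x : X d) :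
    birkhoff (fun y => c * g y) n x = c * birkhoff g n x := by
  simp [birkhoff, Finset.mul_sum]

lemma birkhoff_sub_const (g : X d → ℝ) (b : ℝ) (n : ℕ) (x : X d) :
    birkhoff (fun y => g y - b) n x = birkhoff g n x - n * b := by
  simp [birkhoff, Finset.sum_sub_distrib]

lemma birkhoff_le_of_le {g : X d → ℝ} {M : ℝ} (hM : ∀ y, g y ≤ M) (n : ℕ) (x : X d) :
    birkhoff g n x ≤ n * M := by
  unfold birkhoff
  simpa using Finset.sum_le_sum fun i (_ : i ∈ Finset.range n) => hM (shift^[i] x)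

lemma birkhoff_nonneg {g : X d → ℝ} (hg : ∀ y, 0 ≤ g y) (n : ℕ) (x : X d) :
    0 ≤ birkhoff g n x :=
  Finset.sum_nonneg fun _ _ => hg _

lemma continuous_birkhoff {g : X d → ℝ} (hg : Continuous g) (n : ℕ) :
    Continuous (birkhoff g n) :=
  continuous_finsetSum _ fun i _ => hg.comp (continuous_shift.iterate i)

end Shift

lemma eventually_mul_pow_lt (K : ℝ) {θ : ℝ} (hθ0 : 0 ≤ θ) (hθ1 : θ < 1) {ε : ℝ} (hε : 0 < ε) :
    ∀ᶠ k in atTop, K * θ ^ k < ε := by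
  have := (tendsto_pow_atTop_nhds_zero_of_lt_one hθ0 hθ1).const_mul K
  rw [mul_zero] at this
  exact this.eventually (gt_mem_nhds hε)

section Distortion

variable {d : ℕ}

def BoundedDistortion (θ K : ℝ) (g : X d → ℝ) : Prop :=
  ∀ (N k : ℕ) (x y : X d), (∀ j < N + k, x j = y j) →
    |birkhoff g N x - birkhoff g N y| ≤ K * θ ^ k

variable {θ K : ℝ} {g : X d → ℝ}

lemma LipWrt.abs_sub_le_mul_pow {C : ℝ} (hθ0 : 0 < θ) (hθ1 : θ < 1)
    (hg : LipWrt θ C g) (hC : 0 ≤ C) {x y : X d} {k : ℕ} (hxy : ∀ j < k, x j = y j) :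
    |g x - g y| ≤ C * θ ^ k := by
  by_cases h : x = y
  · subst h
    simp only [sub_self, abs_zero]
    positivity
  have hk : k ≤ Nat.find (Function.ne_iff.mp h) :=
    Nat.le_find_iff _ _ |>.mpr fun m hm => not_not.mpr (hxy m hm)
  calc |g x - g y| ≤ C * dtheta θ x y := hg x y
    _ = C * θ ^ Nat.find (Function.ne_iff.mp h) := by simp only [dtheta, dif_neg h]
    _ ≤ C * θ ^ k := mul_le_mul_of_nonneg_left (pow_le_pow_of_le_one hθ0.le hθ1.le hk) hC

lemma LipWrt.boundedDistortion {C : ℝ} (hθ0 : 0 < θ) (hθ1 : θ < 1)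
    (hg : LipWrt θ C g) : ∃ K, BoundedDistortion θ K g := by
  set C' := max C 0
  have hg' : LipWrt θ C' g := fun x y => (hg x y).trans <| by
    gcongr
    · unfold dtheta; split <;> positivity
    · exact le_max_left C 0
  refine ⟨C' * (1 - θ)⁻¹, fun N k x y hxy => ?_⟩
  have hterm : ∀ i ∈ Finset.range N,
      |g (shift^[i] x) - g (shift^[i] y)| ≤ C' * θ ^ k * θ ^ (N - 1 - i) := by
    intro i hi
    have hi := Finset.mem_range.mp hi
    calc |g (shift^[i] x) - g (shift^[i] y)| ≤ C' * θ ^ (k + (N - 1 - i) + 1) :=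
          LipWrt.abs_sub_le_mul_pow hθ0 hθ1 hg' (le_max_right C 0) fun j hj => by
            simp only [shift_iterate_apply]; exact hxy _ (by omega)
      _ ≤ C' * θ ^ (k + (N - 1 - i)) :=
          mul_le_mul_of_nonneg_left (pow_le_pow_of_le_one hθ0.le hθ1.le (Nat.le_succ _))
            (le_max_right C 0)
      _ = C' * θ ^ k * θ ^ (N - 1 - i) := by rw [pow_add, mul_assoc]
  have hgeom : ∑ i ∈ Finset.range N, θ ^ (N - 1 - i) ≤ (1 - θ)⁻¹ := by
    rw [Finset.sum_range_reflect (fun i => θ ^ i) N, ← tsum_geometric_of_lt_one hθ0.le hθ1]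
    exact (summable_geometric_of_lt_one hθ0.le hθ1).sum_le_tsum _ fun i _ => by positivity
  calc |birkhoff g N x - birkhoff g N y|
      = |∑ i ∈ Finset.range N, (g (shift^[i] x) - g (shift^[i] y))| := by
        rw [birkhoff, birkhoff, Finset.sum_sub_distrib]
    _ ≤ ∑ i ∈ Finset.range N, C' * θ ^ k * θ ^ (N - 1 - i) :=
        (Finset.abs_sum_le_sum_abs _ _).trans (Finset.sum_le_sum hterm)
    _ ≤ C' * θ ^ k * (1 - θ)⁻¹ := by
        rw [← Finset.mul_sum]; gcongr
    _ = C' * (1 - θ)⁻¹ * θ ^ k := by ring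

lemma BoundedDistortion.continuous (hD : BoundedDistortion θ K g) (hθ0 : 0 ≤ θ) (hθ1 : θ < 1) :
    Continuous g := by
  refine continuous_iff_continuousAt.mpr fun x => Metric.tendsto_nhds.mpr fun ε hε => ?_
  obtain ⟨k, hk⟩ := (eventually_mul_pow_lt K hθ0 hθ1 hε).exists
  have hnhds : {y : X d | ∀ j < 1 + k, y j = x j} ∈ 𝓝 x := by
    have : {y : X d | ∀ j < 1 + k, y j = x j} = ⋂ j ∈ Finset.range (1 + k), {y | y j = x j} := by
      ext; simp
    rw [this]
    exact (Finset.iInter_mem_sets _).mpr fun j _ =>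
      (continuous_apply j).continuousAt.preimage_mem_nhds (isOpen_discrete {x j} |>.mem_nhds rfl)
  filter_upwards [hnhds] with y hy
  simpa [Real.dist_eq, birkhoff] using (hD 1 k y x hy).trans_lt hk

end Distortion

section Invariant

variable {d : ℕ} {g : X d → ℝ}

lemma integrable_of_continuous (hg : Continuous g) (μ : Measure (X d)) [IsFiniteMeasure μ] :
    Integrable g μ :=
  hg.integrable_of_hasCompactSupport (HasCompactSupport.of_compactSpace g)

lemma integral_le_of_forall_le (hg : Continuous g) (μ : Measure (X d)) [IsProbabilityMeasure μ]
    {M : ℝ} (hM : ∀ y, g y ≤ M) : ∫ x, g x ∂μ ≤ M := by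
  simpa using integral_mono (integrable_of_continuous hg μ) (integrable_const M) hM

lemma integral_birkhoff (hg : Continuous g) {μ : Measure (X d)} [IsProbabilityMeasure μ]
    (hμ : μ.map shift = μ) (N : ℕ) : ∫ x, birkhoff g N x ∂μ = N * ∫ x, g x ∂μ := by
  have hinv : ∀ i, ∫ x, g (shift^[i] x) ∂μ = ∫ x, g x ∂μ := fun i => by
    have hi := (MeasurePreserving.mk measurable_shift hμ).iterate i
    conv_rhs => rw [← hi.map_eq]
    exact (integral_map hi.measurable.aemeasurable hg.aestronglyMeasurable).symm
  simp only [birkhoff]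
  rw [integral_finsetSum (f := fun i x => g (shift^[i] x)) _ fun i _ =>
    integrable_of_continuous (hg.comp (continuous_shift.iterate i)) μ]
  simp [hinv]

lemma sum_range_succ_eq_of_periodic {M : Type*} [AddCommMonoid M] {N : ℕ} (h : ℕ → M)
    (hN : h N = h 0) : ∑ i ∈ Finset.range N, h (i + 1) = ∑ i ∈ Finset.range N, h i := by
  cases N with
  | zero => rfl
  | succ m => rw [Finset.sum_range_succ, hN, Finset.sum_range_succ' _ m]

def orbitSegmentMeasure (N : ℕ) (x : X d) : Measure (X d) :=
  (N : ℝ≥0∞)⁻¹ • ∑ i ∈ Finset.range N, Measure.dirac (shift^[i] x)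

lemma isProbabilityMeasure_orbitSegmentMeasure {N : ℕ} (hN : 0 < N) (x : X d) :
    IsProbabilityMeasure (orbitSegmentMeasure N x) := by
  constructor
  simp [orbitSegmentMeasure, ENNReal.inv_mul_cancel (Nat.cast_ne_zero.mpr hN.ne')]

lemma map_shift_orbitSegmentMeasure {N : ℕ} {x : X d} (hx : shift^[N] x = x) :
    (orbitSegmentMeasure N x).map shift = orbitSegmentMeasure N x := by
  have hsum : (∑ i ∈ Finset.range N, Measure.dirac (shift^[i] x)).map shift
      = ∑ i ∈ Finset.range N, Measure.dirac (shift^[i] x) := by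
    rw [← Measure.mapₗ_apply_of_measurable measurable_shift, map_sum]
    simp only [Measure.mapₗ_apply_of_measurable measurable_shift,
      Measure.map_dirac' measurable_shift, ← Function.iterate_succ_apply' shift]
    exact sum_range_succ_eq_of_periodic (fun i => Measure.dirac (shift^[i] x)) (by rw [hx]; rfl)
  rw [orbitSegmentMeasure, Measure.map_smul, hsum]

lemma integral_orbitSegmentMeasure (hg : Continuous g) {N : ℕ} (x : X d) :
    ∫ y, g y ∂(orbitSegmentMeasure N x) = birkhoff g N x / N := by
  rw [orbitSegmentMeasure, integral_smul_measure,
    integral_finsetSum_measure fun i _ => integrable_of_continuous hg _]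
  simp [integral_dirac' _ _ hg.stronglyMeasurable, birkhoff, div_eq_inv_mul]

end Invariant

section Beta

variable {d : ℕ} {g : X d → ℝ}

lemma bddAbove_invariantIntegrals (hg : Continuous g) :
    BddAbove {r : ℝ | ∃ μ : Measure (X d), IsProbabilityMeasure μ ∧ μ.map shift = μ ∧
      r = ∫ x, g x ∂μ} := by
  obtain ⟨M, hM⟩ := (isCompact_range hg).bddAbove
  refine ⟨M, ?_⟩
  rintro r ⟨μ, hμ, -, rfl⟩
  exact integral_le_of_forall_le hg μ fun y => hM ⟨y, rfl⟩

lemma integral_le_beta (hg : Continuous g) (μ : Measure (X d)) [IsProbabilityMeasure μ]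
    (hμ : μ.map shift = μ) : ∫ x, g x ∂μ ≤ beta g :=
  le_csSup (bddAbove_invariantIntegrals hg) ⟨μ, inferInstance, hμ, rfl⟩

lemma beta_le (hd : 0 < d) {b : ℝ}
    (hb : ∀ μ : Measure (X d), IsProbabilityMeasure μ → μ.map shift = μ → ∫ x, g x ∂μ ≤ b) :
    beta g ≤ b := by
  have hfix : (Measure.dirac fun _ => ⟨0, hd⟩ : Measure (X d)).map shift =
      .dirac fun _ => ⟨0, hd⟩ :=
    Measure.map_dirac' measurable_shift _
  refine csSup_le ⟨_, _, inferInstance, hfix, rfl⟩ ?_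
  rintro r ⟨μ, hμ, hμinv, rfl⟩
  exact hb μ hμ hμinv

lemma beta_le_of_forall_le (hd : 0 < d) (hg : Continuous g) {M : ℝ} (hM : ∀ y, g y ≤ M) :
    beta g ≤ M :=
  beta_le hd fun μ _ _ => integral_le_of_forall_le hg μ hM

lemma beta_pos (hd : 0 < d) (hg : Continuous g) (hpos : ∀ y, 0 < g y) : 0 < beta g := by
  have := integral_le_beta hg (.dirac fun _ => ⟨0, hd⟩) (Measure.map_dirac' measurable_shift _)
  rw [integral_dirac' _ _ hg.stronglyMeasurable] at this
  exact (hpos _).trans_le this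

lemma birkhoff_le_of_isPeriodicPt (hg : Continuous g) {N : ℕ} (hN : 0 < N) {x : X d}
    (hx : shift^[N] x = x) : birkhoff g N x ≤ N * beta g := by
  have := isProbabilityMeasure_orbitSegmentMeasure hN x
  have h := integral_le_beta hg _ (map_shift_orbitSegmentMeasure hx)
  rw [integral_orbitSegmentMeasure hg, div_le_iff₀ (by positivity)] at h
  linarith

end Beta

section PeriodicWords

variable {d : ℕ} {θ K : ℝ} {f : X d → ℝ}

lemma birkhoff_periodize_le (hf : Continuous f) (n : ℕ) (w : Fin (n + 1) → Fin d) :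
    birkhoff f (n + 1) (periodize n w) ≤ ((n : ℝ) + 1) * beta f := by
  simpa using birkhoff_le_of_isPeriodicPt hf n.succ_pos (shift_iterate_periodize n w)

lemma BoundedDistortion.exists_le_birkhoff_periodize (hD : BoundedDistortion θ K f) (hd : 0 < d)
    (hf : Continuous f) (n : ℕ) :
    ∃ w : Fin (n + 1) → Fin d, ((n : ℝ) + 1) * beta f ≤ birkhoff f (n + 1) (periodize n w) + K := by
  have : Nonempty (Fin d) := ⟨⟨0, hd⟩⟩
  obtain ⟨w, hw⟩ :=
    Finite.exists_max fun w : Fin (n + 1) → Fin d => birkhoff f (n + 1) (periodize n w)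
  refine ⟨w, ?_⟩
  have hle : ∀ x : X d, birkhoff f (n + 1) x ≤ birkhoff f (n + 1) (periodize n w) + K := fun x => by
    have hx := hD (n + 1) 0 x (periodize n fun i => x i) fun j hj =>
      (periodize_of_lt n (fun i => x i) hj).symm
    rw [pow_zero, mul_one] at hx
    linarith [(abs_le.mp hx).2, hw fun i => x i]
  rw [← le_div_iff₀' (by positivity)]
  refine beta_le hd fun μ _ hμ => ?_
  rw [le_div_iff₀' (by positivity)]
  have := integral_birkhoff hf hμ (n + 1)
  push_cast at this
  exact this ▸ integral_le_of_forall_le (continuous_birkhoff hf _) μ hle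

end PeriodicWords

section Pressure

variable {d : ℕ} {θ K : ℝ} {f : X d → ℝ}

lemma log_sum_exp_le {ι : Type*} [Fintype ι] [Nonempty ι] {v : ι → ℝ} {V : ℝ}
    (hv : ∀ i, v i ≤ V) : Real.log (∑ i, Real.exp (v i)) ≤ V + Real.log (Fintype.card ι) := by
  rw [Real.log_le_iff_le_exp (by positivity), Real.exp_add,
    Real.exp_log (by simp [Fintype.card_pos])]
  calc ∑ i, Real.exp (v i) ≤ ∑ _i : ι, Real.exp V :=
        Finset.sum_le_sum fun i _ => Real.exp_le_exp.mpr (hv i)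
    _ = _ := by simp [mul_comm]

lemma le_log_sum_exp {ι : Type*} [Fintype ι] (v : ι → ℝ) (i : ι) :
    v i ≤ Real.log (∑ j, Real.exp (v j)) := by
  rw [Real.le_log_iff_exp_le (Finset.sum_pos (fun j _ => Real.exp_pos _) ⟨i, Finset.mem_univ i⟩)]
  exact Finset.single_le_sum (f := fun j => Real.exp (v j)) (fun j _ => (Real.exp_pos _).le)
    (Finset.mem_univ i)

lemma BoundedDistortion.pressure_bounds (hD : BoundedDistortion θ K f) (hd : 0 < d)
    (hf : Continuous f) {c : ℝ} (hc : 0 ≤ c) :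
    c * beta f ≤ pressure (fun y => c * f y) ∧
      pressure (fun y => c * f y) ≤ c * beta f + Real.log d := by
  have : Nonempty (Fin d) := ⟨⟨0, hd⟩⟩
  set a : ℕ → ℝ := fun n => Real.log (∑ w : Fin (n + 1) → Fin d,
    Real.exp (birkhoff (fun y => c * f y) (n + 1) (periodize n w))) / ((n : ℝ) + 1)
  have hpres : pressure (fun y => c * f y) = limsup a atTop := rfl
  have hub : ∀ n : ℕ, a n ≤ c * beta f + Real.log d := fun n => by
    rw [div_le_iff₀ (by positivity)]
    refine (log_sum_exp_le (V := c * ((n + 1) * beta f)) fun w => ?_).trans_eq ?_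
    · rw [birkhoff_const_mul]
      exact mul_le_mul_of_nonneg_left (birkhoff_periodize_le hf n w) hc
    · simp only [Fintype.card_pi, Fintype.card_fin, Finset.prod_const, Finset.card_univ,
        Nat.cast_pow, Real.log_pow, Nat.cast_add, Nat.cast_one]
      ring
  have hlb : ∀ n : ℕ, c * beta f - c * K / ((n : ℝ) + 1) ≤ a n := fun n => by
    obtain ⟨w, hw⟩ := hD.exists_le_birkhoff_periodize hd hf n
    rw [le_div_iff₀ (by positivity)]
    refine le_trans ?_ (le_log_sum_exp _ w)
    rw [birkhoff_const_mul, sub_mul, div_mul_cancel₀ _ (by positivity)]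
    nlinarith
  have hlim : Tendsto (fun n : ℕ => c * beta f - c * K / ((n : ℝ) + 1)) atTop (𝓝 (c * beta f)) := by
    simpa using tendsto_const_nhds.sub
      ((tendsto_const_div_atTop_nhds_zero_nat (c * K)).comp (tendsto_add_atTop_nat 1))
  refine ⟨hpres ▸ ?_, hpres ▸ limsup_le_of_le ?_ (Eventually.of_forall hub)⟩
  · calc c * beta f = limsup (fun n : ℕ => c * beta f - c * K / ((n : ℝ) + 1)) atTop :=
          hlim.limsup_eq.symm
      _ ≤ limsup a atTop := limsup_le_limsup (Eventually.of_forall hlb) hlim.isCoboundedUnder_le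
          (isBoundedUnder_of ⟨_, hub⟩)
  · exact (hlim.isBoundedUnder_ge.mono_ge (Eventually.of_forall hlb)).isCoboundedUnder_flip

end Pressure

section PeriodicApproximation

variable {d : ℕ} {θ K : ℝ} {f g : X d → ℝ}

lemma periodize_add_self (n : ℕ) (w : Fin (n + 1) → Fin d) (i : ℕ) :
    periodize n w (n + 1 + i) = periodize n w i := by
  simp only [periodize, Nat.add_mod_left]

lemma eq_periodize_of_return {y : X d} {m k : ℕ} (hy : ∀ i < k, y (m + 1 + i) = y i) :
    ∀ j < m + 1 + k, y j = periodize m (fun i => y i) j := by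
  intro j
  induction j using Nat.strong_induction_on with
  | _ j ih =>
    intro hj
    by_cases hjm : j < m + 1
    · exact (periodize_of_lt m (fun i => y i) hjm).symm
    · obtain ⟨i, rfl⟩ := Nat.exists_eq_add_of_le (not_lt.mp hjm)
      rw [hy i (by omega), periodize_add_self, ih i (by omega) (by omega)]

lemma BoundedDistortion.birkhoff_le_of_return (hD : BoundedDistortion θ K f) {ε : ℝ} {m k : ℕ}
    (hk : K * θ ^ k ≤ ε) {y : X d} (hy : ∀ i < k, y (m + 1 + i) = y i) :
    birkhoff f (m + 1) y ≤ birkhoff f (m + 1) (periodize m fun i => y i) + ε := by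
  have := hD (m + 1) k _ _ (eq_periodize_of_return hy)
  linarith [(abs_le.mp this).2]

lemma exists_mem_birkhoff_le_of_infinite {a : ℝ} {x : X d} {S : Set ℕ} (hS : S.Infinite)
    (hseg : ∀ t ∈ S, ∀ t' ∈ S, t < t' → birkhoff g (t' - t) (shift^[t] x) ≤ -a) {t₀ : ℕ}
    (ht₀ : t₀ ∈ S) (R : ℕ) :
    ∃ t ∈ S, t₀ ≤ t ∧ birkhoff g (t - t₀) (shift^[t₀] x) ≤ -(R * a) := by
  induction R with
  | zero => exact ⟨t₀, ht₀, le_rfl, by simp [birkhoff_zero]⟩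
  | succ R ih =>
    obtain ⟨t, ht, ht₀t, hR⟩ := ih
    obtain ⟨t', ht', htt'⟩ := hS.exists_gt t
    refine ⟨t', ht', by omega, ?_⟩
    have hsplit := birkhoff_add g (t - t₀) (t' - t) (shift^[t₀] x)
    rw [← Function.iterate_add_apply, show t - t₀ + t₀ = t by omega,
      show t - t₀ + (t' - t) = t' - t₀ by omega] at hsplit
    push_cast
    linarith [hseg t ht t' ht' htt']

lemma exists_birkhoff_lt_of_returns {M a : ℝ} {k : ℕ} (hM : ∀ y, g y ≤ M) (ha : 0 < a)
    (hret : ∀ (y : X d) (p : ℕ), 0 < p → (∀ i < k, y (p + i) = y i) → birkhoff g p y ≤ -a)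
    (x : X d) (L : ℝ) : ∃ m, birkhoff g m x < L := by
  let block : ℕ → Fin k → Fin d := fun t i => x (t + i)
  obtain ⟨w, hw⟩ := Finite.exists_infinite_fiber block
  have hS : (block ⁻¹' {w}).Infinite := Set.infinite_coe_iff.mp hw
  have hseg : ∀ t ∈ block ⁻¹' {w}, ∀ t' ∈ block ⁻¹' {w}, t < t' →
      birkhoff g (t' - t) (shift^[t] x) ≤ -a := fun t ht t' ht' hlt =>
    hret _ _ (by omega) fun i hi => by
      have := congrFun (ht'.trans ht.symm) ⟨i, hi⟩
      simp only [block] at this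
      rw [shift_iterate_apply, shift_iterate_apply, show t' - t + i + t = t' + i by omega, this,
        Nat.add_comm]
  obtain ⟨t₀, ht₀⟩ := hS.nonempty
  obtain ⟨R, hR⟩ := exists_nat_gt ((t₀ * M - L) / a)
  obtain ⟨t, -, ht₀t, hdrop⟩ := exists_mem_birkhoff_le_of_infinite hS hseg ht₀ R
  refine ⟨t, ?_⟩
  have hsplit := birkhoff_add g t₀ (t - t₀) x
  rw [show t₀ + (t - t₀) = t by omega] at hsplit
  rw [div_lt_iff₀ ha] at hR
  linarith [birkhoff_le_of_le hM t₀ x]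

lemma exists_uniform_index_lt {Y : Type*} [TopologicalSpace Y] [CompactSpace Y]
    {F : ℕ → Y → ℝ} (hF : ∀ m, Continuous (F m)) {L : ℝ} (h : ∀ y, ∃ m, F m y < L) :
    ∃ n₀, ∀ y, ∃ m ≤ n₀, F m y < L := by
  let U : ℕ → Set Y := fun n => ⋃ m ≤ n, {y | F m y < L}
  have hmono : Monotone U := fun n n' hn => Set.biUnion_mono (fun m hm => le_trans hm hn)
    fun _ _ => subset_rfl
  obtain ⟨n₀, hn₀⟩ := isCompact_univ.elim_directed_cover U
    (fun n => isOpen_biUnion fun m _ => isOpen_lt (hF m) continuous_const)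
    (fun y _ => by
      obtain ⟨m, hm⟩ := h y
      exact Set.mem_iUnion.mpr ⟨m, Set.mem_iUnion₂.mpr ⟨m, le_rfl, hm⟩⟩)
    hmono.directed_le
  exact ⟨n₀, fun y => by simpa [U] using hn₀ (Set.mem_univ y)⟩

lemma birkhoff_le_of_uniform_drop {M : ℝ} (hM : ∀ y, g y ≤ M) (hM0 : 0 ≤ M) {n₀ : ℕ}
    (hn₀ : ∀ x : X d, ∃ m ≤ n₀, birkhoff g m x < -1) (T : ℕ) (x : X d) :
    birkhoff g T x ≤ n₀ * M + 1 - T * (n₀ : ℝ)⁻¹ := by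
  induction T using Nat.strong_induction_on generalizing x with
  | _ T ih =>
    by_cases hT : T ≤ n₀
    · have h1 : (T : ℝ) * (n₀ : ℝ)⁻¹ ≤ 1 := by
        rw [← div_eq_mul_inv]; exact div_le_one_of_le₀ (by exact_mod_cast hT) (by positivity)
      have h2 : (T : ℝ) * M ≤ n₀ * M := by gcongr
      linarith [birkhoff_le_of_le hM T x]
    · obtain ⟨m, hm, hdrop⟩ := hn₀ x
      have hm0 : m ≠ 0 := by rintro rfl; norm_num [birkhoff_zero] at hdrop
      have h1 : (m : ℝ) * (n₀ : ℝ)⁻¹ ≤ 1 := by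
        rw [← div_eq_mul_inv]; exact div_le_one_of_le₀ (by exact_mod_cast hm) (by positivity)
      have hsplit := birkhoff_add g m (T - m) x
      rw [show m + (T - m) = T by omega] at hsplit
      have := ih (T - m) (by omega) (shift^[m] x)
      push_cast [show m ≤ T by omega] at this
      nlinarith

lemma integral_le_of_birkhoff_le (hg : Continuous g) {A δ : ℝ}
    (h : ∀ (T : ℕ) (x : X d), birkhoff g T x ≤ A - T * δ) (μ : Measure (X d))
    [IsProbabilityMeasure μ] (hμ : μ.map shift = μ) : ∫ x, g x ∂μ ≤ -δ := by
  have hlim : Tendsto (fun T : ℕ => A / T - δ) atTop (𝓝 (-δ)) := by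
    simpa using (tendsto_const_div_atTop_nhds_zero_nat A).sub_const δ
  refine ge_of_tendsto hlim ((eventually_gt_atTop 0).mono fun T hT => ?_)
  have hT' : (0 : ℝ) < T := by exact_mod_cast hT
  rw [div_sub' hT'.ne', le_div_iff₀ hT', mul_comm, ← integral_birkhoff hg hμ]
  exact integral_le_of_forall_le (continuous_birkhoff hg T) μ (by intro x; linarith [h T x])

theorem BoundedDistortion.exists_le_birkhoff_periodize_add (hD : BoundedDistortion θ K f)
    (hθ0 : 0 ≤ θ) (hθ1 : θ < 1) (hd : 0 < d) {ε : ℝ} (hε : 0 < ε) :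
    ∃ (n : ℕ) (w : Fin (n + 1) → Fin d),
      ((n : ℝ) + 1) * beta f ≤ birkhoff f (n + 1) (periodize n w) + ε := by
  by_contra! H
  have hf := hD.continuous hθ0 hθ1
  set β := beta f
  let g : X d → ℝ := fun y => f y - β
  have hg : Continuous g := hf.sub continuous_const
  obtain ⟨M, hMrange⟩ := (isCompact_range hf).bddAbove
  have hM : ∀ y, f y ≤ M := fun y => hMrange ⟨y, rfl⟩
  have hβM : β ≤ M := beta_le_of_forall_le hd hf hM
  obtain ⟨k, hk⟩ := (eventually_mul_pow_lt K hθ0 hθ1 (half_pos hε)).exists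
  have hret : ∀ (y : X d) (p : ℕ), 0 < p → (∀ i < k, y (p + i) = y i) →
      birkhoff g p y ≤ -(ε / 2) := by
    intro y p hp hy
    obtain ⟨m, rfl⟩ : ∃ m, p = m + 1 := ⟨p - 1, by omega⟩
    have := hD.birkhoff_le_of_return hk.le (m := m) (by simpa using hy)
    rw [birkhoff_sub_const]
    push_cast
    linarith [H m fun i => y i]
  obtain ⟨n₀, hn₀⟩ := exists_uniform_index_lt (continuous_birkhoff hg)
    (exists_birkhoff_lt_of_returns (fun y => sub_le_sub_right (hM y) β) (half_pos hε) hret · (-1))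
  have hn₀pos : 0 < n₀ := by
    obtain ⟨m, hm, hdrop⟩ := hn₀ fun _ => ⟨0, hd⟩
    rcases Nat.eq_zero_or_pos m with rfl | hm0
    · norm_num [birkhoff_zero] at hdrop
    · omega
  have hinv := integral_le_of_birkhoff_le hg
    (birkhoff_le_of_uniform_drop (fun y => sub_le_sub_right (hM y) β) (sub_nonneg.mpr hβM) hn₀)
  have : β ≤ β - (n₀ : ℝ)⁻¹ := beta_le hd fun μ _ hμ => by
    have := hinv μ hμ
    rw [integral_sub (integrable_of_continuous hf μ) (integrable_const β)] at this
    simp only [integral_const, probReal_univ, smul_eq_mul, one_mul] at this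
    linarith
  linarith [inv_pos.mpr (show (0 : ℝ) < n₀ by exact_mod_cast hn₀pos)]

end PeriodicApproximation

section WeightedAverage

variable {κ : ℕ → Type*} [∀ n, Fintype (κ n)] {a v : ∀ n, κ n → ℝ} {b : ℝ}

lemma summable_sum_mul_of_le (ha : ∀ n i, 0 ≤ a n i) (hv0 : ∀ n i, 0 ≤ v n i)
    (hvb : ∀ n i, v n i ≤ b) (hs : Summable fun n => ∑ i, a n i) :
    Summable fun n => ∑ i, a n i * v n i :=
  (hs.mul_left b).of_nonneg_of_le
    (fun n => Finset.sum_nonneg fun i _ => mul_nonneg (ha n i) (hv0 n i))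
    fun n => by
      rw [Finset.mul_sum]
      exact Finset.sum_le_sum fun i _ => by nlinarith [ha n i, hvb n i]

lemma tsum_sum_mul_le (ha : ∀ n i, 0 ≤ a n i) (hv0 : ∀ n i, 0 ≤ v n i)
    (hvb : ∀ n i, v n i ≤ b) (hs : Summable fun n => ∑ i, a n i) :
    ∑' n, ∑ i, a n i * v n i ≤ b * ∑' n, ∑ i, a n i := by
  rw [← tsum_mul_left]
  refine (summable_sum_mul_of_le ha hv0 hvb hs).tsum_le_tsum (fun n => ?_) (hs.mul_left b)
  rw [Finset.mul_sum]
  exact Finset.sum_le_sum fun i _ => by nlinarith [ha n i, hvb n i]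

/-- Values within `δ` of the upper bound `b` cost at most `δ`; the others cost at most `b`. -/
lemma mul_tsum_sub_tsum_sum_mul_le (ha : ∀ n i, 0 ≤ a n i) (hv0 : ∀ n i, 0 ≤ v n i)
    (hvb : ∀ n i, v n i ≤ b) (hs : Summable fun n => ∑ i, a n i) {δ : ℝ} (hδ : 0 ≤ δ) :
    b * ∑' n, ∑ i, a n i - ∑' n, ∑ i, a n i * v n i ≤
      δ * ∑' n, ∑ i, a n i +
        b * ∑' n, ∑ i ∈ Finset.univ.filter (fun i => v n i ≤ b - δ), a n i := by
  have hbad : Summable fun n => ∑ i ∈ Finset.univ.filter (fun i => v n i ≤ b - δ), a n i :=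
    hs.of_nonneg_of_le (fun n => Finset.sum_nonneg fun i _ => ha n i)
      fun n => Finset.sum_le_sum_of_subset_of_nonneg (Finset.filter_subset _ _)
        fun i _ _ => ha n i
  rw [← tsum_mul_left, ← tsum_mul_left, ← tsum_mul_left,
    ← (hs.mul_left b).tsum_sub (summable_sum_mul_of_le ha hv0 hvb hs),
    ← (hs.mul_left δ).tsum_add (hbad.mul_left b)]
  refine ((hs.mul_left b).sub (summable_sum_mul_of_le ha hv0 hvb hs)).tsum_le_tsum
    (fun n => ?_) ((hs.mul_left δ).add (hbad.mul_left b))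
  simp only [Finset.mul_sum, ← Finset.sum_sub_distrib, Finset.sum_filter, ← Finset.sum_add_distrib]
  refine Finset.sum_le_sum fun i _ => ?_
  split_ifs with h
  · nlinarith [mul_nonneg hδ (ha n i), mul_nonneg (ha n i) (hv0 n i)]
  · nlinarith [ha n i]

end WeightedAverage

section ZetaMeasure

variable {d : ℕ}

def zetaWeight (f : X d → ℝ) (c s : ℝ) (n : ℕ) (w : Fin (n + 1) → Fin d) : ℝ :=
  Real.exp (c * s * birkhoff f (n + 1) (periodize n w) -
    ((n : ℝ) + 1) * pressure (fun y => c * f y))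

def periodicAverage (k : X d → ℝ) (n : ℕ) (w : Fin (n + 1) → Fin d) : ℝ :=
  birkhoff k (n + 1) (periodize n w) / ((n : ℝ) + 1)

variable {f : X d → ℝ} {c s : ℝ}

lemma zetaVal_eq (k : X d → ℝ) :
    zetaVal f c s k = ∑' n, ∑ w, zetaWeight f c s n w * periodicAverage k n w := rfl

lemma zetaVal_one : zetaVal f c s (fun _ => 1) = ∑' n, ∑ w, zetaWeight f c s n w := by
  simp only [zetaVal_eq, periodicAverage, birkhoff_const]
  congr! 3 with n w
  push_cast
  rw [mul_one, div_self (by positivity), mul_one]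

lemma periodicAverage_le (hf : Continuous f) (n : ℕ) (w : Fin (n + 1) → Fin d) :
    periodicAverage f n w ≤ beta f := by
  rw [periodicAverage, div_le_iff₀ (by positivity), mul_comm]
  exact birkhoff_periodize_le hf n w

lemma periodicAverage_nonneg (hfpos : ∀ x, 0 < f x) (n : ℕ) (w : Fin (n + 1) → Fin d) :
    0 ≤ periodicAverage f n w :=
  div_nonneg (birkhoff_nonneg (fun y => (hfpos y).le) _ _) (by positivity)

lemma zetaVal_le (hf : Continuous f) (hfpos : ∀ x, 0 < f x)
    (hZ : Summable fun n => ∑ w, zetaWeight f c s n w) :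
    zetaVal f c s f ≤ beta f * zetaVal f c s (fun _ => 1) := by
  rw [zetaVal_eq, zetaVal_one]
  exact tsum_sum_mul_le (fun _ _ => (Real.exp_pos _).le) (periodicAverage_nonneg hfpos)
    (periodicAverage_le hf) hZ

lemma zetaWeight_le_of_periodicAverage_le (hc : 0 ≤ c) (hs0 : 0 ≤ s) (hs1 : s ≤ 1)
    (hβ : 0 ≤ beta f) (hP : c * beta f ≤ pressure (fun y => c * f y)) {δ : ℝ} {n : ℕ}
    {w : Fin (n + 1) → Fin d} (hw : periodicAverage f n w ≤ beta f - δ) :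
    zetaWeight f c s n w ≤ Real.exp (-(c * s * δ)) ^ (n + 1) := by
  rw [periodicAverage, div_le_iff₀ (by positivity)] at hw
  rw [zetaWeight, ← Real.exp_nat_mul, Real.exp_le_exp]
  have hcs : 0 ≤ c * s := mul_nonneg hc hs0
  have : c * s * beta f ≤ c * beta f := by
    nlinarith [mul_nonneg (mul_nonneg hc hβ) (sub_nonneg.mpr hs1)]
  push_cast
  nlinarith [mul_le_mul_of_nonneg_left hw hcs]

lemma tsum_zetaWeight_filter_le (hd : 0 < d) (hc : 0 ≤ c) (hs0 : 0 ≤ s) (hs1 : s ≤ 1)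
    (hβ : 0 ≤ beta f) (hP : c * beta f ≤ pressure (fun y => c * f y)) {δ : ℝ}
    (hq : d * Real.exp (-(c * s * δ)) ≤ 1 / 2) :
    ∑' n, ∑ w ∈ Finset.univ.filter (fun w => periodicAverage f n w ≤ beta f - δ),
      zetaWeight f c s n w ≤ 2 * (d * Real.exp (-(c * s * δ))) := by
  set q := d * Real.exp (-(c * s * δ))
  have hq0 : 0 ≤ q := by positivity
  have hlevel : ∀ n, ∑ w ∈ Finset.univ.filter (fun w => periodicAverage f n w ≤ beta f - δ),
      zetaWeight f c s n w ≤ q ^ (n + 1) := fun n => by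
    calc _ ≤ ∑ w ∈ Finset.univ.filter (fun w => periodicAverage f n w ≤ beta f - δ),
          Real.exp (-(c * s * δ)) ^ (n + 1) := Finset.sum_le_sum fun w hw =>
            zetaWeight_le_of_periodicAverage_le hc hs0 hs1 hβ hP (Finset.mem_filter.mp hw).2
      _ ≤ ∑ _w : Fin (n + 1) → Fin d, Real.exp (-(c * s * δ)) ^ (n + 1) :=
          Finset.sum_le_sum_of_subset_of_nonneg (Finset.filter_subset _ _) fun _ _ _ => by
            positivity
      _ = q ^ (n + 1) := by simp [q, mul_pow]
  have hgeom : HasSum (fun n => q ^ (n + 1)) (q * (1 - q)⁻¹) := by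
    simpa [pow_succ'] using (hasSum_geometric_of_lt_one hq0 (by linarith)).mul_left q
  calc _ ≤ q * (1 - q)⁻¹ := (hgeom.summable.of_nonneg_of_le
          (fun n => Finset.sum_nonneg fun _ _ => (Real.exp_pos _).le) hlevel).tsum_le_tsum
            hlevel hgeom.summable |>.trans_eq hgeom.tsum_eq
    _ ≤ 2 * q := by
      rw [mul_comm 2]
      gcongr
      rw [inv_le_comm₀ (by linarith) (by norm_num)]
      linarith

lemma le_zetaWeight (hc : 0 ≤ c) (hs0 : 0 ≤ s)
    (hP : pressure (fun y => c * f y) ≤ c * beta f + Real.log d)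
    {ε : ℝ} {n : ℕ} {w : Fin (n + 1) → Fin d}
    (hw : ((n : ℝ) + 1) * beta f ≤ birkhoff f (n + 1) (periodize n w) + ε) :
    Real.exp (-(c * s * ε + c * (1 - s) * (((n : ℝ) + 1) * beta f) + ((n : ℝ) + 1) * Real.log d))
      ≤ zetaWeight f c s n w := by
  rw [zetaWeight, Real.exp_le_exp]
  nlinarith [mul_le_mul_of_nonneg_left hw (mul_nonneg hc hs0),
    mul_le_mul_of_nonneg_left hP (show (0 : ℝ) ≤ n + 1 by positivity)]

end ZetaMeasure

section ZetaLimit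

variable {d : ℕ} {θ K : ℝ} {f : X d → ℝ} {c s : ℝ}

lemma zetaWeight_le_zetaVal_one (hZ : Summable fun n => ∑ w, zetaWeight f c s n w) (n : ℕ)
    (w : Fin (n + 1) → Fin d) : zetaWeight f c s n w ≤ zetaVal f c s (fun _ => 1) := by
  have hnonneg : ∀ m, 0 ≤ ∑ w, zetaWeight f c s m w :=
    fun m => Finset.sum_nonneg fun _ _ => (Real.exp_pos _).le
  rw [zetaVal_one]
  exact (Finset.single_le_sum (f := zetaWeight f c s n) (fun _ _ => (Real.exp_pos _).le)
    (Finset.mem_univ w)).trans (hZ.le_tsum n fun m _ => hnonneg m)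

lemma zetaVal_one_pos (hd : 0 < d) (hZ : Summable fun n => ∑ w, zetaWeight f c s n w) :
    0 < zetaVal f c s (fun _ => 1) :=
  (Real.exp_pos _).trans_le (zetaWeight_le_zetaVal_one hZ 0 fun _ => ⟨0, hd⟩)

lemma zetaVal_div_le (hd : 0 < d) (hf : Continuous f) (hfpos : ∀ x, 0 < f x)
    (hZ : Summable fun n => ∑ w, zetaWeight f c s n w) :
    zetaVal f c s f / zetaVal f c s (fun _ => 1) ≤ beta f :=
  (div_le_iff₀ (zetaVal_one_pos hd hZ)).mpr (zetaVal_le hf hfpos hZ)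

/-- The partition function is at least the weight of one periodic orbit of total defect `ε`,
which dwarfs the total weight of the words of average below `beta f - 2 * ε`. -/
lemma BoundedDistortion.tsum_zetaWeight_filter_le_mul (hD : BoundedDistortion θ K f) (hd : 0 < d)
    (hf : Continuous f) (hβ : 0 ≤ beta f) (hc : 0 < c) (hs0 : 0 < s) (hs1 : s < 1)
    (hZ : Summable fun n => ∑ w, zetaWeight f c s n w) {ε : ℝ} {n : ℕ} {w : Fin (n + 1) → Fin d}
    (hw : ((n : ℝ) + 1) * beta f ≤ birkhoff f (n + 1) (periodize n w) + ε)
    (hq : d * Real.exp (-(c * s * (2 * ε))) ≤ 1 / 2) :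
    ∑' m, ∑ v ∈ Finset.univ.filter (fun v => periodicAverage f m v ≤ beta f - 2 * ε),
        zetaWeight f c s m v ≤
      2 * d ^ (n + 2) * Real.exp (c * ((1 - s) * (((n : ℝ) + 1) * beta f) - s * ε)) *
        zetaVal f c s (fun _ => 1) := by
  obtain ⟨hP1, hP2⟩ := hD.pressure_bounds hd hf hc.le
  set E := c * s * ε + c * (1 - s) * (((n : ℝ) + 1) * beta f) + ((n : ℝ) + 1) * Real.log d
  have hZge : Real.exp (-E) ≤ zetaVal f c s (fun _ => 1) :=
    (le_zetaWeight hc.le hs0.le hP2 hw).trans (zetaWeight_le_zetaVal_one hZ n w)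
  have hlog : ((n : ℝ) + 1) * Real.log d = Real.log (d ^ (n + 1)) := by
    rw [Real.log_pow]; push_cast; ring
  have hexp : 2 * (d * Real.exp (-(c * s * (2 * ε)))) =
      2 * d ^ (n + 2) * Real.exp (c * ((1 - s) * (((n : ℝ) + 1) * beta f) - s * ε)) *
        Real.exp (-E) := by
    rw [mul_assoc (2 * (d : ℝ) ^ (n + 2)), ← Real.exp_add,
      show c * ((1 - s) * (((n : ℝ) + 1) * beta f) - s * ε) + -E =
        -(c * s * (2 * ε)) - ((n : ℝ) + 1) * Real.log d by ring, Real.exp_sub, hlog,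
      Real.exp_log (by positivity), pow_succ]
    field_simp
  exact (tsum_zetaWeight_filter_le hd hc.le hs0.le hs1.le hβ hP1 hq).trans
    (hexp ▸ by gcongr)

lemma BoundedDistortion.beta_sub_zetaVal_div_le (hD : BoundedDistortion θ K f) (hd : 0 < d)
    (hf : Continuous f) (hfpos : ∀ x, 0 < f x) (hc : 0 < c) (hs0 : 0 < s) (hs1 : s < 1)
    (hZ : Summable fun n => ∑ w, zetaWeight f c s n w) {ε : ℝ} (hε : 0 ≤ ε) {n : ℕ}
    {w : Fin (n + 1) → Fin d} (hw : ((n : ℝ) + 1) * beta f ≤ birkhoff f (n + 1) (periodize n w) + ε)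
    (hq : d * Real.exp (-(c * s * (2 * ε))) ≤ 1 / 2) :
    beta f - zetaVal f c s f / zetaVal f c s (fun _ => 1) ≤
      2 * ε + beta f * (2 * d ^ (n + 2) *
        Real.exp (c * ((1 - s) * (((n : ℝ) + 1) * beta f) - s * ε))) := by
  have hβ : 0 ≤ beta f := (beta_pos hd hf hfpos).le
  have hZpos := zetaVal_one_pos hd hZ
  have hbad := hD.tsum_zetaWeight_filter_le_mul hd hf hβ hc hs0 hs1 hZ hw hq
  have hsplit := mul_tsum_sub_tsum_sum_mul_le (a := zetaWeight f c s)
    (fun _ _ => (Real.exp_pos _).le) (periodicAverage_nonneg hfpos) (periodicAverage_le hf) hZ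
    (by positivity : 0 ≤ 2 * ε)
  rw [← zetaVal_one, ← zetaVal_eq] at hsplit
  rw [sub_le_iff_le_add, ← sub_le_iff_le_add', le_div_iff₀ hZpos]
  nlinarith [mul_le_mul_of_nonneg_left hbad hβ]

theorem BoundedDistortion.tendsto_zetaVal_div (hD : BoundedDistortion θ K f) (hθ0 : 0 ≤ θ)
    (hθ1 : θ < 1) (hd : 0 < d) (hfpos : ∀ x, 0 < f x) {cj sj : ℕ → ℝ}
    (hcj : Tendsto cj atTop atTop) (hsj : Tendsto sj atTop (𝓝 1)) (hcpos : ∀ j, 0 < cj j)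
    (hsrange : ∀ j, 0 < sj j ∧ sj j < 1)
    (hZ : ∀ j, Summable fun n => ∑ w, zetaWeight f (cj j) (sj j) n w) :
    Tendsto (fun j => zetaVal f (cj j) (sj j) f / zetaVal f (cj j) (sj j) (fun _ => 1)) atTop
      (𝓝 (beta f)) := by
  have hf := hD.continuous hθ0 hθ1
  refine tendsto_order.2 ⟨fun a ha => ?_, fun a ha =>
    Eventually.of_forall fun j => (zetaVal_div_le hd hf hfpos (hZ j)).trans_lt ha⟩
  set ε := (beta f - a) / 4
  have hε : 0 < ε := by simp only [ε]; linarith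
  obtain ⟨n, w, hw⟩ := hD.exists_le_birkhoff_periodize_add hθ0 hθ1 hd hε
  have hexp : ∀ {b : ℕ → ℝ} {L : ℝ}, L < 0 → Tendsto b atTop (𝓝 L) →
      Tendsto (fun j => Real.exp (cj j * b j)) atTop (𝓝 0) :=
    fun hL hb => Real.tendsto_exp_atBot.comp (hcj.atTop_mul_neg hL hb)
  have hgood := hexp (neg_lt_zero.mpr hε)
    (b := fun j => (1 - sj j) * (((n : ℝ) + 1) * beta f) - sj j * ε)
    (by simpa using (((tendsto_const_nhds (x := (1 : ℝ))).sub hsj).mul_const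
      (((n : ℝ) + 1) * beta f)).sub (hsj.mul_const ε))
  have hbad := hexp (by linarith : -(2 * ε) < 0) (b := fun j => -(sj j * (2 * ε)))
    (by simpa using (hsj.mul_const (2 * ε)).neg)
  filter_upwards
    [(hbad.const_mul (d : ℝ)).eventually (ge_mem_nhds (by norm_num : (d : ℝ) * 0 < 1 / 2)),
    (hgood.const_mul (beta f * (2 * d ^ (n + 2)))).eventually (gt_mem_nhds (by simpa using hε))]
    with j hq hsmall
  have := hD.beta_sub_zetaVal_div_le hd hf hfpos (hcpos j) (hsrange j).1 (hsrange j).2 (hZ j)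
    hε.le hw (by simpa [mul_neg, mul_assoc] using hq)
  simp only [ε] at this hsmall ⊢
  linarith

end ZetaLimit

theorem stmt5_general (d : ℕ) (hd : 0 < d) (θ C : ℝ) (hθ0 : 0 < θ) (hθ1 : θ < 1)
    (f : X d → ℝ) (hf : LipWrt θ C f) (hfpos : ∀ x, 0 < f x)
    (μ : ℝ → ℝ → Measure (X d))
    (hprob : ∀ c s : ℝ, 0 < c → 0 < s → s < 1 → IsProbabilityMeasure (μ c s))
    (hdef : ∀ c s : ℝ, 0 < c → 0 < s → s < 1 → ∀ k : X d → ℝ, Continuous k →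
      ∫ x, k x ∂(μ c s) = zetaVal f c s k / zetaVal f c s (fun _ => 1))
    (ν : Measure (X d))
    (cj sj : ℕ → ℝ) (hcj : Tendsto cj atTop atTop) (hsj : Tendsto sj atTop (𝓝 1))
    (hcpos : ∀ j, 0 < cj j) (hsrange : ∀ j, 0 < sj j ∧ sj j < 1)
    (hacc : ∀ g : X d → ℝ, Continuous g →
      Tendsto (fun j => ∫ x, g x ∂(μ (cj j) (sj j))) atTop (𝓝 (∫ x, g x ∂ν))) :
    ∫ x, f x ∂ν = beta f := by
  obtain ⟨K, hK⟩ := hf.boundedDistortion hθ0 hθ1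
  have hfc := hK.continuous hθ0.le hθ1
  have hZ : ∀ j, Summable fun n => ∑ w, zetaWeight f (cj j) (sj j) n w := fun j => by
    obtain ⟨hs0, hs1⟩ := hsrange j
    have := hprob _ _ (hcpos j) hs0 hs1
    have hone := hdef _ _ (hcpos j) hs0 hs1 (fun _ => 1) continuous_const
    -- a divergent partition function would make the total mass `0 / 0 = 0`
    by_contra h
    simp [zetaVal_one, tsum_eq_zero_of_not_summable h] at hone
  refine tendsto_nhds_unique (hacc f hfc) ?_
  refine (hK.tendsto_zetaVal_div hθ0.le hθ1 hd hfpos hcj hsj hcpos hsrange hZ).congr fun j => ?_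
  exact (hdef _ _ (hcpos j) (hsrange j).1 (hsrange j).2 f hfc).symm

theorem stmt5 (d : ℕ) (hd : 0 < d) (θ C : ℝ) (hθ0 : 0 < θ) (hθ1 : θ < 1)
    (f : X d → ℝ) (hf : LipWrt θ C f) (hfpos : ∀ x, 0 < f x)
    (μ : ℝ → ℝ → Measure (X d))
    (hprob : ∀ c s : ℝ, 0 < c → 0 < s → s < 1 → IsProbabilityMeasure (μ c s))
    (hdef : ∀ c s : ℝ, 0 < c → 0 < s → s < 1 → ∀ k : X d → ℝ, Continuous k →
      ∫ x, k x ∂(μ c s) = zetaVal f c s k / zetaVal f c s (fun _ => 1))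
    (ν : Measure (X d)) (hν : IsProbabilityMeasure ν)
    (cj sj : ℕ → ℝ) (hcj : Tendsto cj atTop atTop) (hsj : Tendsto sj atTop (𝓝 1))
    (hcpos : ∀ j, 0 < cj j) (hsrange : ∀ j, 0 < sj j ∧ sj j < 1)
    (hacc : ∀ g : X d → ℝ, Continuous g →
      Tendsto (fun j => ∫ x, g x ∂(μ (cj j) (sj j))) atTop (𝓝 (∫ x, g x ∂ν))) :
    ∫ x, f x ∂ν = beta f :=
  stmt5_general d hd θ C hθ0 hθ1 f hf hfpos μ hprob hdef ν cj sj hcj hsj hcpos hsrange hacc
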